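/- Let (V, w) be a d-regular weighted graph with d > 0, all vertices colored red; fix an integer s ≥ 2, add a disjoint blue vertex set V_B with |V_B| = |V|, fix B ⊆ V_B with |B| = s, give every pair of distinct vertices of B weight t = 2d/(s−1), keep the weights w inside V, and give all remaining pairs involving V_B weight 0; call the resulting weighted graph G'. Let 0 < μ ≤ 1 and let F be a fair set of vertices of G' with k := |F ∩ V| satisfying k ≥ (2/μ)·s. Then the density of F satisfies D_F ≤ d/2 + d·s/k ≤ (1 + 2μ)·d/2. -/

import Mathlib

/-- `W(X)`: sum over ordered pairs of (distinct, since the diagonal weight is 0)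
vertices of `X` of the weight of the pair. -/
noncomputable def pairWeight {α : Type*} (w : α → α → ℝ) (X : Finset α) : ℝ :=
  ∑ i ∈ X, ∑ j ∈ X, w i j

/-- Density of a vertex set `X` in a weighted graph: `D_X = W(X)/|X|`. -/
noncomputable def wdensity {α : Type*} (w : α → α → ℝ) (X : Finset α) : ℝ :=
  pairWeight w X / X.card

/-- soundness case (4): if `F` is fair with `k = |F ∩ V| ≥ (2/μ)·s`
(`0 < μ ≤ 1`), then `D_F ≤ d/2 + d·s/k ≤ (1 + 2μ)·d/2`. -/
theorem sse_soundness_case_14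
    {V : Type*} [Fintype V] [DecidableEq V]
    (w : V → V → ℝ) (d : ℝ) (hd : 0 < d)
    (hsymm : ∀ i j, w i j = w j i) (hnonneg : ∀ i j, 0 ≤ w i j)
    (hdiag : ∀ i, w i i = 0)
    (hreg : ∀ i, ∑ j, w i j = d)
    (s : ℕ) (hs2 : 2 ≤ s) (B : Finset V) (hB : B.card = s)
    (t : ℝ) (ht : t = 2 * d / (s - 1))
    -- the weights of G' on V ⊕ V (left = red original copy, right = blue copy):
    (w' : V ⊕ V → V ⊕ V → ℝ)
    (hw' : w' = fun a b =>
      match a, b with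
      | .inl i, .inl j => w i j
      | .inr i, .inr j => if i ∈ B ∧ j ∈ B ∧ i ≠ j then t else 0
      | _, _ => 0)
    -- a fair set F of vertices of G', decomposed into its red and blue parts:
    (Fred Fblue : Finset V) (hfair : Fred.card = Fblue.card)
    (F : Finset (V ⊕ V))
    (hF : F = Fred.map ⟨Sum.inl, Sum.inl_injective⟩ ∪ Fblue.map ⟨Sum.inr, Sum.inr_injective⟩)
    (k : ℕ) (hk : k = Fred.card)
    (μ : ℝ) (hμ0 : 0 < μ) (hμ : μ ≤ 1) (hk2 : (k : ℝ) ≥ (2 / μ) * s) :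
    wdensity w' F ≤ d / 2 + d * s / (k : ℝ) ∧
    d / 2 + d * s / (k : ℝ) ≤ (1 + 2 * μ) * d / 2 := by

  have hs1 : (1:ℝ) ≤ (s:ℝ) - 1 := by
    have : (2:ℝ) ≤ (s:ℝ) := by exact_mod_cast hs2
    linarith
  have hs1' : (s:ℝ) - 1 ≠ 0 := by linarith
  have ht2d : t * ((s:ℝ) - 1) = 2 * d := by
    rw [ht]; field_simp
  have ht0 : 0 ≤ t := by
    rw [ht]; positivity
  have hk0 : (0:ℝ) < (k:ℝ) := by
    have h2 : (2:ℝ) ≤ 2 / μ := by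
      rw [le_div_iff₀ hμ0]; linarith
    have hs0 : (0:ℝ) < (s:ℝ) := by linarith
    nlinarith
  have hdisj : Disjoint (Fred.map ⟨Sum.inl, Sum.inl_injective⟩)
      (Fblue.map ⟨Sum.inr, Sum.inr_injective⟩) := by
    simp [Finset.disjoint_left]
  have hsplit : ∀ f : V ⊕ V → ℝ, ∑ a ∈ F, f a
      = ∑ i ∈ Fred, f (Sum.inl i) + ∑ i ∈ Fblue, f (Sum.inr i) := by
    intro f
    rw [hF, Finset.sum_union hdisj, Finset.sum_map, Finset.sum_map]
    rfl
  have hcard : (F.card : ℝ) = 2 * (k:ℝ) := by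
    rw [hF, Finset.card_union_of_disjoint hdisj, Finset.card_map, Finset.card_map,
      ← hfair, ← hk]
    push_cast; ring
  have hW : pairWeight w' F = pairWeight w Fred
      + ∑ i ∈ Fblue, ∑ j ∈ Fblue, (if i ∈ B ∧ j ∈ B ∧ i ≠ j then t else 0) := by
    subst hw'
    simp only [pairWeight]
    rw [hsplit]
    simp only [hsplit]
    simp
  -- red part
  have hred : pairWeight w Fred ≤ d * (k:ℝ) := by
    have : pairWeight w Fred ≤ ∑ i ∈ Fred, ∑ j, w i j := by
      apply Finset.sum_le_sum
      intro i _
      exact Finset.sum_le_sum_of_subset_of_nonneg (Finset.subset_univ _)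
        (fun j _ _ => hnonneg i j)
    calc pairWeight w Fred ≤ ∑ i ∈ Fred, ∑ j, w i j := this
      _ = ∑ _i ∈ Fred, d := by
          apply Finset.sum_congr rfl; intro i _; exact hreg i
      _ = d * (k:ℝ) := by
          rw [Finset.sum_const, hk]; simp [mul_comm]
  -- blue part
  have hblue : ∑ i ∈ Fblue, ∑ j ∈ Fblue, (if i ∈ B ∧ j ∈ B ∧ i ≠ j then t else 0)
      ≤ 2 * d * (s:ℝ) := by
    have hinner : ∀ i ∈ Fblue, ∑ j ∈ Fblue, (if i ∈ B ∧ j ∈ B ∧ i ≠ j then t else 0)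
        ≤ (if i ∈ B then t * ((s:ℝ) - 1) else 0) := by
      intro i _
      by_cases hiB : i ∈ B
      · rw [if_pos hiB]
        have hsum : ∑ j ∈ Fblue, (if i ∈ B ∧ j ∈ B ∧ i ≠ j then t else 0)
            = (Fblue.filter (fun j => i ∈ B ∧ j ∈ B ∧ i ≠ j)).card * t := by
          rw [← Finset.sum_filter, Finset.sum_const, nsmul_eq_mul]
        rw [hsum]
        have hsub : Fblue.filter (fun j => i ∈ B ∧ j ∈ B ∧ i ≠ j) ⊆ B.erase i := by
          intro j hj
          simp only [Finset.mem_filter] at hj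
          exact Finset.mem_erase.mpr ⟨(hj.2.2.2).symm, hj.2.2.1⟩
        have hcle : (Fblue.filter (fun j => i ∈ B ∧ j ∈ B ∧ i ≠ j)).card ≤ s - 1 := by
          have := Finset.card_le_card hsub
          rwa [Finset.card_erase_of_mem hiB, hB] at this
        have hcler : ((Fblue.filter (fun j => i ∈ B ∧ j ∈ B ∧ i ≠ j)).card : ℝ)
            ≤ (s:ℝ) - 1 := by
          have h1s : 1 ≤ s := by omega
          have : ((Fblue.filter (fun j => i ∈ B ∧ j ∈ B ∧ i ≠ j)).card : ℝ)
              ≤ ((s - 1 : ℕ) : ℝ) := by exact_mod_cast hcle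
          rwa [Nat.cast_sub h1s, Nat.cast_one] at this
        calc ((Fblue.filter (fun j => i ∈ B ∧ j ∈ B ∧ i ≠ j)).card : ℝ) * t
            ≤ ((s:ℝ) - 1) * t := by
              apply mul_le_mul_of_nonneg_right hcler ht0
          _ = t * ((s:ℝ) - 1) := by ring
      · rw [if_neg hiB]
        apply Finset.sum_nonpos
        intro j _
        simp [hiB]
    have houter : ∑ i ∈ Fblue, (if i ∈ B then t * ((s:ℝ) - 1) else 0)
        ≤ (s:ℝ) * (t * ((s:ℝ) - 1)) := by
      rw [← Finset.sum_filter, Finset.sum_const, nsmul_eq_mul]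
      have hc : ((Fblue.filter (fun i => i ∈ B)).card : ℝ) ≤ (s:ℝ) := by
        have : (Fblue.filter (fun i => i ∈ B)).card ≤ B.card :=
          Finset.card_le_card (fun x hx => (Finset.mem_filter.mp hx).2)
        rw [hB] at this
        exact_mod_cast this
      have hnn : 0 ≤ t * ((s:ℝ) - 1) := by positivity
      exact mul_le_mul_of_nonneg_right hc hnn
    calc ∑ i ∈ Fblue, ∑ j ∈ Fblue, (if i ∈ B ∧ j ∈ B ∧ i ≠ j then t else 0)
        ≤ ∑ i ∈ Fblue, (if i ∈ B then t * ((s:ℝ) - 1) else 0) :=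
          Finset.sum_le_sum hinner
      _ ≤ (s:ℝ) * (t * ((s:ℝ) - 1)) := houter
      _ = 2 * d * (s:ℝ) := by rw [ht2d]; ring
  have hWtot : pairWeight w' F ≤ d * (k:ℝ) + 2 * d * (s:ℝ) := by
    rw [hW]; linarith
  constructor
  · unfold wdensity
    rw [hcard]
    have h2k : (0:ℝ) < 2 * (k:ℝ) := by linarith
    calc pairWeight w' F / (2 * (k:ℝ)) ≤ (d * (k:ℝ) + 2 * d * (s:ℝ)) / (2 * (k:ℝ)) := by
          gcongr
      _ = d / 2 + d * (s:ℝ) / (k:ℝ) := by field_simp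
  · have h2s : 2 * (s:ℝ) ≤ μ * (k:ℝ) := by
      have h := hk2
      rw [ge_iff_le, div_mul_eq_mul_div, div_le_iff₀ hμ0] at h
      linarith
    have : d * (s:ℝ) / (k:ℝ) ≤ μ * d := by
      rw [div_le_iff₀ hk0]
      nlinarith
    linarith
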